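/- arXiv:2304.02339 — 2 statements merged into one kernel-verified Lean document; each statement's English description precedes it below -/
import Mathlib

section
/- Let X ~ N(θ*, σ²/n_e) be unbiased and Y ~ N(θ* + δ, σ²/n_o) independent of X, with δ ≠ 0. For η ≥ 0 define the pooled estimator θ̂_η = (n_e X + η n_o Y)/(n_e + η n_o). Then the MSE E[(θ̂_η - θ*)²] = (n_e σ² + η² n_o σ² + η² n_o² δ²)/(n_e + η n_o)², and this quantity at η = 0 equals σ²/n_e; moreover dMSE/dη at η = 0 equals -2 n_o σ²/n_e² < 0, so pooling a small amount of biased data strictly reduces MSE. -/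
open Real MeasureTheory ProbabilityTheory
open scoped Topology

/-!
With `w = ne / (ne + η no)` the pooled estimator is `w X + (1 - w) Y`. For independent
square-integrable `X, Y` the bias–variance decomposition gives its mean squared error about `θs`
as `w² Var X + (1 - w)² Var Y + ((1 - w) δ)²`, so only the first two moments of the Gaussians
matter. Near `η = 0` the MSE is this rational function of `η`, whose derivative at `0` is computed
by the quotient rule.
-/

namespace ProbabilityTheory

section Moments

variable {Ω : Type*} {mΩ : MeasurableSpace Ω} {μ : Measure Ω} [IsProbabilityMeasure μ]

lemma integral_sub_sq_eq_variance_add_sq {Z : Ω → ℝ} (hZ : MemLp Z 2 μ) (c : ℝ) :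
    ∫ ω, (Z ω - c) ^ 2 ∂μ = Var[Z; μ] + (μ[Z] - c) ^ 2 := by
  have hZc : MemLp (fun ω => Z ω - c) 2 μ := hZ.sub (memLp_const c)
  have h := variance_eq_sub hZc
  rw [variance_sub_const hZ.aestronglyMeasurable,
    integral_sub (hZ.integrable one_le_two) (integrable_const c)] at h
  simp only [integral_const, probReal_univ, smul_eq_mul, one_mul, Pi.pow_apply] at h
  linarith

lemma IndepFun.integral_mul_add_mul_sub_sq {X Y : Ω → ℝ} (hX : MemLp X 2 μ)
    (hY : MemLp Y 2 μ) (hXY : X ⟂ᵢ[μ] Y) (a b c : ℝ) :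
    ∫ ω, (a * X ω + b * Y ω - c) ^ 2 ∂μ
      = a ^ 2 * Var[X; μ] + b ^ 2 * Var[Y; μ] + (a * μ[X] + b * μ[Y] - c) ^ 2 := by
  have haX : MemLp (fun ω => a * X ω) 2 μ := hX.const_mul a
  have hbY : MemLp (fun ω => b * Y ω) 2 μ := hY.const_mul b
  have hind : (fun ω => a * X ω) ⟂ᵢ[μ] (fun ω => b * Y ω) :=
    hXY.comp (measurable_const_mul a) (measurable_const_mul b)
  rw [integral_sub_sq_eq_variance_add_sq (Z := fun ω => a * X ω + b * Y ω) (haX.add hbY),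
    hind.variance_fun_add haX hbY, variance_const_mul, variance_const_mul,
    integral_add (haX.integrable one_le_two) (hbY.integrable one_le_two),
    integral_const_mul, integral_const_mul]

end Moments

lemma HasLaw.integral_eq_of_gaussianReal {Ω : Type*} {mΩ : MeasurableSpace Ω} {P : Measure Ω}
    {X : Ω → ℝ} {m : ℝ} {v : NNReal} (hX : HasLaw X (gaussianReal m v) P) : P[X] = m :=
  hX.integral_eq.trans integral_id_gaussianReal

lemma HasLaw.variance_eq_of_gaussianReal {Ω : Type*} {mΩ : MeasurableSpace Ω} {P : Measure Ω}
    {X : Ω → ℝ} {m : ℝ} {v : NNReal} (hX : HasLaw X (gaussianReal m v) P) : Var[X; P] = v :=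
  hX.variance_eq.trans variance_id_gaussianReal

end ProbabilityTheory

lemma hasDerivAt_pooledMSE_zero {ne no σ2 δ : ℝ} (hne : ne ≠ 0) :
    HasDerivAt
      (fun η => (ne * σ2 + η ^ 2 * no * σ2 + η ^ 2 * no ^ 2 * δ ^ 2) / (ne + η * no) ^ 2)
      (-(2 * no * σ2) / ne ^ 2) 0 := by
  have hsq : HasDerivAt (fun η : ℝ => η ^ 2) 0 0 := by simpa using hasDerivAt_pow 2 (0 : ℝ)
  have hnum :
      HasDerivAt (fun η : ℝ => ne * σ2 + η ^ 2 * no * σ2 + η ^ 2 * no ^ 2 * δ ^ 2) 0 0 := by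
    simpa using (((hsq.mul_const no).mul_const σ2).const_add (ne * σ2)).fun_add
      ((hsq.mul_const (no ^ 2)).mul_const (δ ^ 2))
  have hden : HasDerivAt (fun η : ℝ => (ne + η * no) ^ 2) (2 * ne * no) 0 := by
    simpa [mul_assoc] using (((hasDerivAt_id (0 : ℝ)).mul_const no).const_add ne).fun_pow 2
  refine (hnum.fun_div hden (by simpa using hne)).congr_deriv ?_
  simp only [zero_mul, add_zero, ne_eq, OfNat.ofNat_ne_zero, not_false_eq_true, zero_pow]
  field_simp
  ring

lemma integral_pooled_sub_sq {Ω : Type*} {mΩ : MeasurableSpace Ω} {μ : Measure Ω}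
    [IsProbabilityMeasure μ] {X Y : Ω → ℝ} {θs δ σ2 ne no η : ℝ}
    (hX : MemLp X 2 μ) (hY : MemLp Y 2 μ) (hXY : X ⟂ᵢ[μ] Y)
    (hmeanX : μ[X] = θs) (hmeanY : μ[Y] = θs + δ)
    (hvarX : Var[X; μ] = σ2 / ne) (hvarY : Var[Y; μ] = σ2 / no)
    (hs : ne + η * no ≠ 0) :
    ∫ ω, ((ne * X ω + η * no * Y ω) / (ne + η * no) - θs) ^ 2 ∂μ
      = (ne * σ2 + η ^ 2 * no * σ2 + η ^ 2 * no ^ 2 * δ ^ 2) / (ne + η * no) ^ 2 := by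
  have hsplit : ∀ ω, (ne * X ω + η * no * Y ω) / (ne + η * no)
      = ne / (ne + η * no) * X ω + η * no / (ne + η * no) * Y ω := fun ω => by ring
  simp_rw [hsplit]
  rw [hXY.integral_mul_add_mul_sub_sq hX hY, hmeanX, hmeanY, hvarX, hvarY]
  field_simp
  ring

theorem stmt6_general {Ω : Type*} [MeasureSpace Ω] [IsProbabilityMeasure (ℙ : Measure Ω)]
    (X Y : Ω → ℝ) (θs δ σ2 ne no : ℝ)
    (hne : 0 < ne) (hno : 0 < no) (hσ : 0 < σ2)
    (hmX : Measurable X) (hmY : Measurable Y)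
    (hX : Measure.map X ℙ = gaussianReal θs ((σ2 / ne).toNNReal))
    (hY : Measure.map Y ℙ = gaussianReal (θs + δ) ((σ2 / no).toNNReal))
    (hind : IndepFun X Y ℙ) :
    (∀ η : ℝ, 0 ≤ η →
      ∫ ω, ((ne * X ω + η * no * Y ω) / (ne + η * no) - θs) ^ 2
        = (ne * σ2 + η ^ 2 * no * σ2 + η ^ 2 * no ^ 2 * δ ^ 2) / (ne + η * no) ^ 2)
    ∧ (∫ ω, ((ne * X ω + 0 * no * Y ω) / (ne + 0 * no) - θs) ^ 2 = σ2 / ne)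
    ∧ HasDerivAt (fun η => ∫ ω, ((ne * X ω + η * no * Y ω) / (ne + η * no) - θs) ^ 2)
        (-(2 * no * σ2) / ne ^ 2) 0
    ∧ -(2 * no * σ2) / ne ^ 2 < 0 := by
  have hXlaw : HasLaw X (gaussianReal θs ((σ2 / ne).toNNReal)) ℙ := ⟨hmX.aemeasurable, hX⟩
  have hYlaw : HasLaw Y (gaussianReal (θs + δ) ((σ2 / no).toNNReal)) ℙ :=
    ⟨hmY.aemeasurable, hY⟩
  have hmse : ∀ η : ℝ, ne + η * no ≠ 0 →
      ∫ ω, ((ne * X ω + η * no * Y ω) / (ne + η * no) - θs) ^ 2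
        = (ne * σ2 + η ^ 2 * no * σ2 + η ^ 2 * no ^ 2 * δ ^ 2) / (ne + η * no) ^ 2 :=
    fun η => integral_pooled_sub_sq hXlaw.hasGaussianLaw.memLp_two hYlaw.hasGaussianLaw.memLp_two
      hind hXlaw.integral_eq_of_gaussianReal hYlaw.integral_eq_of_gaussianReal
      (by rw [hXlaw.variance_eq_of_gaussianReal, Real.coe_toNNReal _ (by positivity)])
      (by rw [hYlaw.variance_eq_of_gaussianReal, Real.coe_toNNReal _ (by positivity)])
  have hs_nhds : ∀ᶠ η in 𝓝 (0 : ℝ), ne + η * no ≠ 0 :=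
    (show ContinuousAt (fun η : ℝ => ne + η * no) 0 by fun_prop).eventually_ne
      (by simpa using hne.ne')
  refine ⟨fun η hη => hmse η (by positivity), ?_, ?_,
    div_neg_of_neg_of_pos (by linarith [mul_pos hno hσ]) (by positivity)⟩
  · rw [hmse 0 (by simpa using hne.ne')]
    field_simp
    ring
  · exact (hasDerivAt_pooledMSE_zero hne.ne').congr_of_eventuallyEq (hs_nhds.mono hmse)

/-- MSE of the pooled estimator: exact formula, value at `η = 0`, and strictly negative
derivative at `η = 0`, so pooling a small amount of biased data strictly reduces MSE. -/
theorem stmt6 {Ω : Type*} [MeasureSpace Ω] [IsProbabilityMeasure (ℙ : Measure Ω)]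
    (X Y : Ω → ℝ) (θs δ σ2 ne no : ℝ)
    (hne : 0 < ne) (hno : 0 < no) (hσ : 0 < σ2) (hδ : δ ≠ 0)
    (hmX : Measurable X) (hmY : Measurable Y)
    (hX : Measure.map X ℙ = gaussianReal θs ((σ2 / ne).toNNReal))
    (hY : Measure.map Y ℙ = gaussianReal (θs + δ) ((σ2 / no).toNNReal))
    (hind : IndepFun X Y ℙ) :
    (∀ η : ℝ, 0 ≤ η →
      ∫ ω, ((ne * X ω + η * no * Y ω) / (ne + η * no) - θs) ^ 2
        = (ne * σ2 + η ^ 2 * no * σ2 + η ^ 2 * no ^ 2 * δ ^ 2) / (ne + η * no) ^ 2)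
    ∧ (∫ ω, ((ne * X ω + 0 * no * Y ω) / (ne + 0 * no) - θs) ^ 2 = σ2 / ne)
    ∧ HasDerivAt (fun η => ∫ ω, ((ne * X ω + η * no * Y ω) / (ne + η * no) - θs) ^ 2)
        (-(2 * no * σ2) / ne ^ 2) 0
    ∧ -(2 * no * σ2) / ne ^ 2 < 0 :=
  stmt6_general X Y θs δ σ2 ne no hne hno hσ hmX hmY hX hY hind
end

section
/- Consider the quadratic equation in η obtained from setting the expected ELPD score to zero: A η² + B η + C = 0 with A = n_o²(Ȳ - θ*)(Ȳ - θ* - 2n_e(Ȳ - X̄)) (up to the paper's normalization), arising from (n_e(X̄-θ*) + η n_o(Ȳ-θ*))² + 2(n_e(X̄-θ*) + η n_o(Ȳ-θ*)) n_e(Ȳ-X̄)(n_e + η n_o + 1) − (n_e + η n_o)σ² = 0. Show that if Ȳ = θ* + δ with δ fixed and nonzero, X̄ = θ* + O(n^{-1/2}), and n_e = c·n_o → ∞, then the equation has a root η_0 satisfying η_0 = -n_e(X̄ - θ*)/(n_o(Ȳ - θ*)) + O(1/n), i.e., asymptotically the root of the linear equation n_e(X̄ - θ*) + η n_o(Ȳ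 - θ*) = 0. -/
/-!
Substituting `η = (u - n_e (X̄ - θ*)) / (n_o (Ȳ - θ*))` turns the score into `n_o` times a quadratic
`α u² + β n_o u + κ` in the value `u` of the linear form, whose coefficients converge, with
`β → 2 c² δ ≠ 0`. For large `n_o` the discriminant is positive and the root of smaller modulus is at
most `2 |κ| / (|β| n_o) → 0`, so the corresponding `η` is within `u / (n_o δ) = o(1/n)` of the
root of the linear equation.
-/

open Filter Topology

theorem exists_root_abs_mul_le (a b k : ℝ) (hb : b ≠ 0) (h : 4 * |a * k| ≤ b ^ 2) :
    ∃ u, a * u ^ 2 + b * u + k = 0 ∧ |u| * |b| ≤ 2 * |k| := by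
  wlog hb' : 0 < b generalizing b
  · obtain ⟨u, hu, hle⟩ := this (-b) (neg_ne_zero.2 hb) (by simpa using h)
      (neg_pos.2 (lt_of_le_of_ne (not_lt.1 hb') hb))
    exact ⟨-u, by linear_combination hu, by simpa using hle⟩
  set s := √(b ^ 2 - 4 * a * k)
  have hs : s ^ 2 = b ^ 2 - 4 * a * k := Real.sq_sqrt (by linarith [le_abs_self (a * k)])
  have hbs : 0 < b + s := add_pos_of_pos_of_nonneg hb' (Real.sqrt_nonneg _)
  -- the root `(-b + s) / (2 a)`, rationalised so that `a = 0` is allowed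
  refine ⟨-2 * k / (b + s), ?_, ?_⟩
  · field_simp
    linear_combination k * hs
  · rw [abs_div, abs_of_pos hbs, abs_of_pos hb', div_mul_eq_mul_div, div_le_iff₀ hbs, abs_mul,
      abs_neg, abs_two]
    nlinarith [abs_nonneg k, Real.sqrt_nonneg (b ^ 2 - 4 * a * k)]

theorem exists_root_tendsto_zero {ι : Type*} {l : Filter ι} {α β κ N : ι → ℝ} {a b k : ℝ}
    (hα : Tendsto α l (𝓝 a)) (hβ : Tendsto β l (𝓝 b)) (hb : b ≠ 0) (hκ : Tendsto κ l (𝓝 k))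
    (hN : Tendsto N l atTop) :
    ∃ u : ι → ℝ, (∀ᶠ i in l, α i * u i ^ 2 + β i * N i * u i + κ i = 0) ∧
      Tendsto u l (𝓝 0) := by
  have hβN : Tendsto (fun i => |β i| * N i) l atTop := hβ.abs.pos_mul_atTop (abs_pos.2 hb) hN
  have hdisc : ∀ᶠ i in l, 4 * |α i * κ i| ≤ (β i * N i) ^ 2 := by
    have : Tendsto (fun i => (|β i| * N i) ^ 2 + -(4 * |α i * κ i|)) l atTop :=
      ((tendsto_pow_atTop two_ne_zero).comp hβN).atTop_add ((hα.mul hκ).abs.const_mul 4).neg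
    filter_upwards [this.eventually_ge_atTop 0] with i hi
    rw [mul_pow, ← sq_abs (β i), ← mul_pow]
    linarith
  have hroot : ∀ i, ∃ u, 0 < N i ∧ β i ≠ 0 ∧ 4 * |α i * κ i| ≤ (β i * N i) ^ 2 →
      α i * u ^ 2 + β i * N i * u + κ i = 0 ∧ ‖u‖ ≤ 2 * |κ i| / (|β i| * N i) := by
    intro i
    by_cases hi : 0 < N i ∧ β i ≠ 0 ∧ 4 * |α i * κ i| ≤ (β i * N i) ^ 2
    · obtain ⟨hNi, hβi, hdisc⟩ := hi
      obtain ⟨u, hu, hle⟩ :=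
        exists_root_abs_mul_le (α i) (β i * N i) (κ i) (mul_ne_zero hβi hNi.ne') hdisc
      rw [abs_mul, abs_of_pos hNi] at hle
      exact ⟨u, fun _ => ⟨hu, (le_div_iff₀ (mul_pos (abs_pos.2 hβi) hNi)).2 hle⟩⟩
    · exact ⟨0, fun h => absurd h hi⟩
  choose u hu using hroot
  have hgood := (hN.eventually_gt_atTop 0).and ((hβ.eventually_ne hb).and hdisc)
  exact ⟨u, hgood.mono fun i hi => (hu i hi).1,
    squeeze_zero_norm' (hgood.mono fun i hi => (hu i hi).2) ((hκ.abs.const_mul 2).div_atTop hβN)⟩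

def elpdScore (ne no θ X Y σ2 η : ℝ) : ℝ :=
  (ne * (X - θ) + η * no * (Y - θ)) ^ 2
    + 2 * (ne * (X - θ) + η * no * (Y - θ)) * ne * (Y - X) * (ne + η * no + 1)
    - (ne + η * no) * σ2

theorem elpdScore_reparam (c σ2 N θ X Y u : ℝ) (hN : N ≠ 0) (hδ : Y - θ ≠ 0) :
    elpdScore (c * N) N θ X Y σ2 ((u - c * N * (X - θ)) / (N * (Y - θ))) =
      N * ((N⁻¹ + 2 * c * (Y - X) / (Y - θ)) * u ^ 2
        + (2 * c * (Y - X) * (c * (Y - X) / (Y - θ) + N⁻¹) - σ2 / (Y - θ) * N⁻¹ ^ 2) * N * u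
        - c * (Y - X) / (Y - θ) * σ2) := by
  unfold elpdScore
  field_simp
  ring

theorem exists_elpdScore_root_near_linear_root {ι : Type*} {l : Filter ι} {c σ2 δ θ : ℝ}
    {N X Y : ι → ℝ} (hc : c ≠ 0) (hδ : δ ≠ 0) (hN : Tendsto N l atTop)
    (hX : Tendsto (fun i => X i - θ) l (𝓝 0)) (hY : ∀ i, Y i - θ = δ) :
    ∃ u : ι → ℝ, Tendsto u l (𝓝 0) ∧ ∀ᶠ i in l,
      elpdScore (c * N i) (N i) θ (X i) (Y i) σ2
        ((u i - c * N i * (X i - θ)) / (N i * (Y i - θ))) = 0 := by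
  have hYX : Tendsto (fun i => Y i - X i) l (𝓝 (δ - 0)) := by
    convert tendsto_const_nhds.sub hX using 2 with i
    rw [← hY i]
    ring
  have hinv : Tendsto (fun i => (N i)⁻¹) l (𝓝 0) := tendsto_inv_atTop_zero.comp hN
  obtain ⟨u, hroot, hu⟩ := exists_root_tendsto_zero (N := N)
    (α := fun i => (N i)⁻¹ + 2 * c * (Y i - X i) / (Y i - θ))
    (β := fun i => 2 * c * (Y i - X i) * (c * (Y i - X i) / (Y i - θ) + (N i)⁻¹)
      - σ2 / (Y i - θ) * (N i)⁻¹ ^ 2)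
    (κ := fun i => -(c * (Y i - X i) / (Y i - θ) * σ2))
    (by simp only [hY]; exact hinv.add ((hYX.const_mul _).div_const _))
    (by simp only [hY]
        exact ((hYX.const_mul _).mul (((hYX.const_mul _).div_const _).add hinv)).sub
          (tendsto_const_nhds.mul (hinv.pow 2)))
    (by field_simp; simp [hc, hδ])
    (by simp only [hY]; exact (((hYX.const_mul _).div_const _).mul_const _).neg) hN
  refine ⟨u, hu, ?_⟩
  filter_upwards [hroot, hN.eventually_gt_atTop 0] with i hi hpos
  rw [elpdScore_reparam c σ2 (N i) θ (X i) (Y i) (u i) hpos.ne' (hY i ▸ hδ), sub_eq_add_neg, hi,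
    mul_zero]

theorem stmt17_general (c σ2 δ θs : ℝ) (hc : 0 < c) (hδ : δ ≠ 0)
    (no : ℕ → ℝ) (hno' : Tendsto no atTop atTop)
    (Xbar Ybar : ℕ → ℝ) (hY : ∀ n, Ybar n = θs + δ)
    (hX : ∃ C : ℝ, ∀ n, |Xbar n - θs| ≤ C / Real.sqrt (no n)) :
    ∃ η0 : ℕ → ℝ, ∃ C : ℝ,
      (∀ᶠ n in atTop,
        (c * no n * (Xbar n - θs) + η0 n * no n * (Ybar n - θs)) ^ 2
          + 2 * (c * no n * (Xbar n - θs) + η0 n * no n * (Ybar n - θs))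
              * (c * no n) * (Ybar n - Xbar n) * (c * no n + η0 n * no n + 1)
          - (c * no n + η0 n * no n) * σ2 = 0)
      ∧ (∀ᶠ n in atTop,
          |η0 n - (-(c * no n * (Xbar n - θs)) / (no n * (Ybar n - θs)))|
            ≤ C / (c * no n + no n)) := by
  obtain ⟨Cx, hXC⟩ := hX
  have hYθ : ∀ n, Ybar n - θs = δ := fun n => by rw [hY n, add_sub_cancel_left]
  have hX0 : Tendsto (fun n => Xbar n - θs) atTop (𝓝 0) :=
    squeeze_zero_norm hXC (tendsto_const_nhds.div_atTop (Real.tendsto_sqrt_atTop.comp hno'))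
  obtain ⟨u, hu, hroot⟩ := exists_elpdScore_root_near_linear_root (σ2 := σ2) hc.ne' hδ hno' hX0 hYθ
  refine ⟨fun n => (u n - c * no n * (Xbar n - θs)) / (no n * (Ybar n - θs)), c + 1, hroot, ?_⟩
  filter_upwards [hu.eventually (eventually_abs_sub_lt 0 (abs_pos.2 hδ)),
    hno'.eventually_gt_atTop 0] with n hun hpos
  rw [sub_zero] at hun
  rw [div_sub_div_same, sub_neg_eq_add, sub_add_cancel, hYθ, abs_div, abs_mul, abs_of_pos hpos,
    show c * no n + no n = (c + 1) * no n by ring, div_mul_cancel_left₀ (by positivity)]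
  calc |u n| / (no n * |δ|) ≤ |δ| / (no n * |δ|) := by gcongr
    _ = (no n)⁻¹ := by field_simp

/-- Asymptotic root tracking: the quadratic ELPD first-order condition has a root within
`O(1/n)` of the root of the linear equation `n_e(X̄-θ*) + η n_o(Ȳ-θ*) = 0`. -/
theorem stmt17 (c σ2 δ θs : ℝ) (hc : 0 < c) (hσ : 0 < σ2) (hδ : δ ≠ 0)
    (no : ℕ → ℝ) (hno : ∀ n, 0 < no n) (hno' : Tendsto no atTop atTop)
    (Xbar Ybar : ℕ → ℝ) (hY : ∀ n, Ybar n = θs + δ)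
    (hX : ∃ C : ℝ, ∀ n, |Xbar n - θs| ≤ C / Real.sqrt (no n)) :
    ∃ η0 : ℕ → ℝ, ∃ C : ℝ,
      (∀ᶠ n in atTop,
        (c * no n * (Xbar n - θs) + η0 n * no n * (Ybar n - θs)) ^ 2
          + 2 * (c * no n * (Xbar n - θs) + η0 n * no n * (Ybar n - θs))
              * (c * no n) * (Ybar n - Xbar n) * (c * no n + η0 n * no n + 1)
          - (c * no n + η0 n * no n) * σ2 = 0)
      ∧ (∀ᶠ n in atTop,
          |η0 n - (-(c * no n * (Xbar n - θs)) / (no n * (Ybar n - θs)))|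
            ≤ C / (c * no n + no n)) :=
  stmt17_general c σ2 δ θs hc hδ no hno' Xbar Ybar hY hX
end
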